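/- arXiv:1503.02234 — 2 statements merged into one kernel-verified Lean document; each statement's English description precedes it below -/
import Mathlib

section
/- Let S = {1,...,N} be finite, π a probability measure on S with all π_i > 0, Q a Q-matrix on S reversible with respect to π, and γ : S → ℝ. Define Ω g(i) = ∑_{j≠i} q_ij (g_j − g_i) + γ_i g_i and E(f) = ⟨f, −Ωf⟩_π where ⟨u,v⟩_π = ∑_i π_i u_i v_i. Suppose g : S → ℝ satisfies g_i > 0 for all i and (−Ω g)_i ≥ λ g_i for all i, for some λ > 0. Then for every f with ∑_i π_i f_i² = 1, E(f) ≥ λ; that is, the principal eigenvalue λ₀ = inf{ E(f) : ‖f‖_{L²(π)} = 1 } satisfies λ₀ ≥ λ. -/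
/-- Lower bound for the principal eigenvalue: if g ≫ 0 and −Ωg ≥ λg with λ > 0,
then E(f) = ⟨f, −Ωf⟩_π ≥ λ for every f with ‖f‖_{L²(π)} = 1. -/
theorem stmt_6 (N : ℕ) (π : Fin N → ℝ) (q : Fin N → Fin N → ℝ) (γ : Fin N → ℝ)
    (hπ : ∀ i, 0 < π i) (hπ1 : ∑ i, π i = 1)
    (hoff : ∀ i j, i ≠ j → 0 ≤ q i j) (hcons : ∀ i, ∑ j, q i j = 0)
    (hrev : ∀ i j, π i * q i j = π j * q j i)
    (Ω : (Fin N → ℝ) → (Fin N → ℝ))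
    (hΩ : ∀ f i, Ω f i = (∑ j, q i j * (f j - f i)) + γ i * f i)
    (lam : ℝ) (hlam : 0 < lam)
    (g : Fin N → ℝ) (hg : ∀ i, 0 < g i) (hΩg : ∀ i, lam * g i ≤ -Ω g i) :
    ∀ f : Fin N → ℝ, ∑ i, π i * f i ^ 2 = 1 →
      lam ≤ ∑ i, π i * f i * (-Ω f i) := by
  intro f hf
  have hgne : ∀ i, g i ≠ 0 := fun i => (hg i).ne'
  set h : Fin N → ℝ := fun i => f i ^ 2 / g i with hh
  have hhg : ∀ i, h i * g i = f i ^ 2 := by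
    intro i; simp only [hh]; rw [div_mul_cancel₀ _ (hgne i)]
  have hhnn : ∀ i, 0 ≤ h i := by
    intro i; exact div_nonneg (sq_nonneg _) (hg i).le
  -- Step 1 : lam ≤ ∑ π h (−Ωg)
  have step1 : lam ≤ ∑ i, π i * h i * (-Ω g i) := by
    have e1 : ∑ i, π i * h i * (lam * g i) = lam := by
      have : ∀ i ∈ Finset.univ, π i * h i * (lam * g i) = lam * (π i * f i ^ 2) := by
        intro i _
        linear_combination (lam * π i) * hhg i
      rw [Finset.sum_congr rfl this, ← Finset.mul_sum, hf, mul_one]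
    calc lam = ∑ i, π i * h i * (lam * g i) := e1.symm
      _ ≤ ∑ i, π i * h i * (-Ω g i) := by
          apply Finset.sum_le_sum
          intro i _
          exact mul_le_mul_of_nonneg_left (hΩg i)
            (mul_nonneg (hπ i).le (hhnn i))
  -- Step 2 : ∑ π h (−Ωg) ≤ ∑ π f (−Ωf)
  set A : Fin N → Fin N → ℝ :=
    fun i j => π i * q i j * (h i * (g j - g i) - f i * (f j - f i)) with hA
  have expand : (∑ i, π i * f i * (-Ω f i)) - (∑ i, π i * h i * (-Ω g i))
      = ∑ i, ∑ j, A i j := by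
    rw [← Finset.sum_sub_distrib]
    apply Finset.sum_congr rfl
    intro i _
    rw [hΩ, hΩ]
    have e2 : ∑ j, A i j
        = π i * h i * (∑ j, q i j * (g j - g i))
          - π i * f i * (∑ j, q i j * (f j - f i)) := by
      rw [Finset.mul_sum, Finset.mul_sum, ← Finset.sum_sub_distrib]
      apply Finset.sum_congr rfl
      intro j _
      simp only [hA]; ring
    rw [e2]
    linear_combination (π i * γ i) * (hhg i)
  have hApair : ∀ i j, 0 ≤ A i j + A j i := by
    intro i j
    by_cases hij : i = j
    · subst hij; simp [hA]
    · have hq := hoff i j hij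
      have e3 : A j i = π i * q i j *
          (h j * (g i - g j) - f j * (f i - f j)) := by
        simp only [hA]; rw [← hrev i j]
      have e4 : A i j + A j i
          = π i * q i j * ((f i * g j - f j * g i) ^ 2 / (g i * g j)) := by
        rw [e3]
        simp only [hA, hh]
        field_simp [hgne i, hgne j]
        ring
      rw [e4]
      have : 0 ≤ (f i * g j - f j * g i) ^ 2 / (g i * g j) :=
        div_nonneg (sq_nonneg _) (mul_nonneg (hg i).le (hg j).le)
      exact mul_nonneg (mul_nonneg (hπ i).le hq) this
  have hD : 0 ≤ ∑ i, ∑ j, A i j := by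
    have hswap : (∑ i, ∑ j, A i j) = ∑ i, ∑ j, A j i := Finset.sum_comm
    have h2 : 0 ≤ (∑ i, ∑ j, A i j) + (∑ i, ∑ j, A j i) := by
      rw [← Finset.sum_add_distrib]
      apply Finset.sum_nonneg
      intro i _
      rw [← Finset.sum_add_distrib]
      exact Finset.sum_nonneg fun j _ => hApair i j
    linarith [hswap ▸ h2]
  linarith [expand ▸ hD, step1, expand]
end

section
/- Let S be a finite set, Q an irreducible Q-matrix on S, γ : S → ℝ, λ₀ ∈ ℝ, and g : S → ℝ with g ≥ 0, g ≢ 0, satisfying for every i: ∑_{j≠i} q_ij g_j = (q_i − γ_i − λ₀) g_i, where q_i = ∑_{j≠i} q_ij. Then for every i with g_i > 0 and every i' with q_{i'i} > 0, we have g_{i'} > 0 and q_{i'} − γ_{i'} − λ₀ > 0; consequently, by irreducibility, g_i > 0 for all i ∈ S. -/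
/-! The eigen-equation `∑_{j ≠ i} q i j g j = (q_i - γ_i - λ₀) g_i` has a nonnegative left-hand side,
and it is strictly positive as soon as some `j ≠ i` has `q i j > 0` and `g j > 0`; then both factors
on the right must be positive. Positivity of `g` thus travels backwards along every positive
transition, and irreducibility carries it from one point where `g > 0` to all of `S`. -/

open Finset

section

variable {S : Type*} [Fintype S] [DecidableEq S] {q : S → S → ℝ}

lemma diag_nonpos_of_sum_eq_zero (hoff : ∀ i j, i ≠ j → 0 ≤ q i j) {i : S}
    (hsum : ∑ j, q i j = 0) : q i i ≤ 0 := by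
  have hoff_sum : 0 ≤ ∑ j ∈ univ.erase i, q i j :=
    sum_nonneg fun j hj => hoff i j (ne_of_mem_erase hj).symm
  rw [← add_sum_erase _ _ (mem_univ i)] at hsum
  linarith

lemma sum_offDiag_mul_pos (hoff : ∀ i j, i ≠ j → 0 ≤ q i j) {g : S → ℝ} (hg : ∀ j, 0 ≤ g j)
    {i i' : S} (hne : i ≠ i') (hq : 0 < q i' i) (hgi : 0 < g i) :
    0 < ∑ j, if j = i' then 0 else q i' j * g j := by
  have hterm_nonneg : ∀ j ∈ univ, 0 ≤ if j = i' then 0 else q i' j * g j := by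
    intro j _
    split_ifs with hj
    · exact le_rfl
    · exact mul_nonneg (hoff i' j (Ne.symm hj)) (hg j)
  calc 0 < q i' i * g i := mul_pos hq hgi
    _ = if i = i' then 0 else q i' i * g i := (if_neg hne).symm
    _ ≤ _ := single_le_sum hterm_nonneg (mem_univ i)

end

theorem stmt_19_general (S : Type*) [Fintype S] [DecidableEq S] (q : S → S → ℝ)
    (hoff : ∀ i j, i ≠ j → 0 ≤ q i j) (hcons : ∀ i, ∑ j, q i j = 0)
    (hirr : ∀ i j : S, i ≠ j → Relation.TransGen (fun k l => 0 < q k l) i j)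
    (γ : S → ℝ) (lam0 : ℝ)
    (qi : S → ℝ)
    (g : S → ℝ) (hgnn : ∀ i, 0 ≤ g i) (hgne : g ≠ 0)
    (heig : ∀ i, (∑ j, if j = i then 0 else q i j * g j) = (qi i - γ i - lam0) * g i) :
    (∀ i i', 0 < g i → 0 < q i' i → 0 < g i' ∧ 0 < qi i' - γ i' - lam0) ∧
      ∀ i, 0 < g i := by
  have step : ∀ i i', 0 < g i → 0 < q i' i → 0 < g i' ∧ 0 < qi i' - γ i' - lam0 := by
    intro i i' hgi hq
    have hne : i ≠ i' := by
      rintro rfl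
      exact (diag_nonpos_of_sum_eq_zero hoff (hcons i)).not_gt hq
    have hprod := heig i' ▸ sum_offDiag_mul_pos hoff hgnn hne hq hgi
    have hcoef := pos_of_mul_pos_left hprod (hgnn i')
    exact ⟨pos_of_mul_pos_right hprod hcoef.le, hcoef⟩
  refine ⟨step, fun i => ?_⟩
  obtain ⟨i₀, hi₀⟩ : ∃ i, g i ≠ 0 := Function.ne_iff.mp hgne
  have hgi₀ : 0 < g i₀ := (hgnn i₀).lt_of_ne hi₀.symm
  rcases eq_or_ne i i₀ with rfl | hne
  · exact hgi₀
  have hpath := hirr i i₀ hne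
  clear hne
  induction hpath using Relation.TransGen.head_induction_on with
  | single hr => exact (step _ _ hgi₀ hr).1
  | head hr _ ih => exact (step _ _ ih hr).1

/-- Positivity propagation for a nonnegative eigenfunction: one-step implication
and, by irreducibility, strict positivity everywhere. -/
theorem stmt_19 (S : Type*) [Fintype S] [DecidableEq S] (q : S → S → ℝ)
    (hoff : ∀ i j, i ≠ j → 0 ≤ q i j) (hcons : ∀ i, ∑ j, q i j = 0)
    (hirr : ∀ i j : S, i ≠ j → Relation.TransGen (fun k l => 0 < q k l) i j)
    (γ : S → ℝ) (lam0 : ℝ)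
    (qi : S → ℝ) (hqi : ∀ i, qi i = ∑ j, if j = i then 0 else q i j)
    (g : S → ℝ) (hgnn : ∀ i, 0 ≤ g i) (hgne : g ≠ 0)
    (heig : ∀ i, (∑ j, if j = i then 0 else q i j * g j) = (qi i - γ i - lam0) * g i) :
    (∀ i i', 0 < g i → 0 < q i' i → 0 < g i' ∧ 0 < qi i' - γ i' - lam0) ∧
      ∀ i, 0 < g i :=
  stmt_19_general S q hoff hcons hirr γ lam0 qi g hgnn hgne heig
end
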